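/- arXiv:1807.05194 — 9 statements merged into one kernel-verified Lean document; each statement's English description precedes it below -/
import Mathlib

section
/- Let A be a subring of ℝ that is dense in ℝ, let m, n be positive integers, let M be an m×n matrix with rational entries and b ∈ ℚ^m, and let K = {x ∈ ℝ^n : for every i, Σ_j M[i,j]·x_j ≤ b_i}. Then K contains a point all of whose coordinates lie in A if and only if K is nonempty and the affine span of K over ℝ (the smallest affine subspace of ℝ^n containing K) contains a point all of whose coordinates lie in A. -/
/-!
Call a constraint implicit if it is tight on all of `K`. A point `y` of the affine span of `K`
satisfies the implicit constraints with equality, and by convexity some `x ∈ K` satisfies all the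
other constraints strictly. The difference `x - y` lies in the real kernel of the implicit rows;
since these rows are rational, that kernel is spanned by integer vectors, so its vectors with
coordinates in the dense ring `A` are dense in it. Moving `y` by such a vector close to `x - y`
keeps the implicit constraints tight and, by openness, the other ones strict.
-/

open Matrix TensorProduct

theorem AffineMap.apply_eq_of_mem_affineSpan {k V₁ P₁ V₂ P₂ : Type*} [Ring k]
    [AddCommGroup V₁] [Module k V₁] [AddTorsor V₁ P₁] [AddCommGroup V₂] [Module k V₂]
    [AddTorsor V₂ P₂] (f : P₁ →ᵃ[k] P₂) {s : Set P₁} {c : P₂} (hs : ∀ x ∈ s, f x = c) {y : P₁}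
    (hy : y ∈ affineSpan k s) : f y = c := by
  have hfy : f y ∈ affineSpan k (f '' s) :=
    AffineSubspace.map_span f s ▸ AffineSubspace.mem_map.2 ⟨y, hy, rfl⟩
  have hsub : f '' s ⊆ {c} := by rintro _ ⟨x, hx, rfl⟩; exact hs x hx
  exact (AffineSubspace.mem_affineSpan_singleton k V₂).1 (affineSpan_mono k hsub hfy)

theorem Convex.exists_forall_lt_of_exists_lt {E ι : Type*} [AddCommGroup E] [Module ℝ E]
    {K : Set E} (hK : Convex ℝ K) (hne : K.Nonempty) {f : ι → E → ℝ} {c : ι → ℝ} (s : Finset ι)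
    (hf : ∀ i ∈ s, ConvexOn ℝ K (f i)) (hle : ∀ i ∈ s, ∀ x ∈ K, f i x ≤ c i)
    (hlt : ∀ i ∈ s, ∃ x ∈ K, f i x < c i) : ∃ x ∈ K, ∀ i ∈ s, f i x < c i := by
  classical
  induction s using Finset.induction_on with
  | empty => exact hne.imp fun x hx => ⟨hx, by simp⟩
  | insert a s _ ih =>
    simp only [Finset.forall_mem_insert] at hf hle hlt ⊢
    obtain ⟨x, hxK, hx⟩ := ih hf.2 hle.2 hlt.2
    obtain ⟨w, hwK, hw⟩ := hlt.1
    have hmid : ∀ i, ConvexOn ℝ K (f i) → f i ((1 / 2 : ℝ) • x + (1 / 2 : ℝ) • w) ≤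
        (1 / 2 : ℝ) * f i x + (1 / 2 : ℝ) * f i w := fun i hi =>
      hi.2 hxK hwK (by norm_num) (by norm_num) (by norm_num)
    refine ⟨(1 / 2 : ℝ) • x + (1 / 2 : ℝ) • w, hK hxK hwK (by norm_num) (by norm_num) (by norm_num),
      ?_, fun i hi => ?_⟩
    · linarith [hmid a hf.1, hle.1 x hxK]
    · linarith [hmid i (hf.2 i hi), hx i hi, hle.2 i hi w hwK]

/-- Since `L` is flat over `K`, base change to `L` commutes with taking kernels. -/
theorem Matrix.ker_mulVecLin_map_algebraMap_le_span {K L m n : Type*} [Field K] [Field L]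
    [Algebra K L] [Fintype m] [Fintype n] (M : Matrix m n K) :
    LinearMap.ker (M.map (algebraMap K L)).mulVecLin ≤
      Submodule.span L ((algebraMap K L ∘ ·) '' LinearMap.ker M.mulVecLin) := by
  classical
  set f := M.mulVecLin
  have hcomm : ∀ t : L ⊗[K] (n → K),
      piScalarRight K L L m (AlgebraTensorModule.lTensor L L f t) =
        (M.map (algebraMap K L)).mulVecLin (piScalarRight K L L n t) := by
    intro t
    induction t using TensorProduct.induction_on with
    | zero => simp
    | tmul l v =>
      ext i
      simp [f, mulVec, dotProduct, Algebra.smul_def, Finset.sum_mul, mul_assoc]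
    | add s t hs ht => simp only [map_add, hs, ht]
  intro x hx
  obtain ⟨t, rfl⟩ := (piScalarRight K L L n).surjective x
  have ht : t ∈ LinearMap.ker (AlgebraTensorModule.lTensor L L f) := by
    apply (piScalarRight K L L m).injective
    rw [hcomm, map_zero]
    exact hx
  rw [Module.Flat.ker_lTensor_eq] at ht
  obtain ⟨s, rfl⟩ := ht
  clear hx
  induction s using TensorProduct.induction_on with
  | zero => simp
  | tmul l v =>
    have hv : piScalarRight K L L n
        (AlgebraTensorModule.lTensor L L (LinearMap.ker f).subtype (l ⊗ₜ v)) =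
          l • (algebraMap K L ∘ (v : n → K)) := by
      ext j; simp [Algebra.smul_def, mul_comm]
    rw [hv]
    exact Submodule.smul_mem _ _ (Submodule.subset_span ⟨v, v.2, rfl⟩)
  | add s t hs ht => rw [map_add, map_add]; exact add_mem hs ht

theorem Matrix.ker_mulVecLin_map_ratCast_le_span_int {L m n : Type*} [Field L] [CharZero L]
    [Fintype m] [Fintype n] (M : Matrix m n ℚ) :
    LinearMap.ker (M.map ((↑) : ℚ → L)).mulVecLin ≤ Submodule.span L
      {v ∈ LinearMap.ker (M.map ((↑) : ℚ → L)).mulVecLin | ∀ j, ∃ z : ℤ, v j = z} := by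
  refine (M.ker_mulVecLin_map_algebraMap_le_span (L := L)).trans (Submodule.span_le.2 ?_)
  rintro _ ⟨q, hq, rfl⟩
  have hMq : M *ᵥ q = 0 := hq
  have hker : M.map ((↑) : ℚ → L) *ᵥ ((↑) ∘ q) = 0 := funext fun i => by
    simpa [hMq] using ((Rat.castHom L).map_mulVec M q i).symm
  obtain ⟨⟨D, hD⟩, hDq⟩ := IsLocalization.exist_integer_multiples_of_finite (nonZeroDivisors ℤ) q
  have hint : (D : L) • ((↑) ∘ q : n → L) ∈
      {v ∈ LinearMap.ker (M.map ((↑) : ℚ → L)).mulVecLin | ∀ j, ∃ z : ℤ, v j = z} := by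
    refine ⟨by simp [hker], fun j => ?_⟩
    obtain ⟨z, hz⟩ := hDq j
    exact ⟨z, by simpa using congrArg ((↑) : ℚ → L) hz.symm⟩
  have hq_eq : algebraMap ℚ L ∘ q = (D : L)⁻¹ • ((D : L) • ((↑) ∘ q : n → L)) := by
    rw [inv_smul_smul₀ (Int.cast_ne_zero.2 (nonZeroDivisors.ne_zero hD))]; rfl
  change algebraMap ℚ L ∘ q ∈ Submodule.span L _
  rw [hq_eq]
  exact Submodule.smul_mem _ _ (Submodule.subset_span hint)

/-- The closure of an `A`-submodule is stable under scalars from `closure A = R`. -/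
theorem Submodule.span_subset_closure_of_dense {R E : Type*} [Ring R] [TopologicalSpace R]
    [AddCommGroup E] [Module R E] [TopologicalSpace E] [ContinuousAdd E] [ContinuousSMul R E]
    {A : Subring R} (hA : Dense (A : Set R)) (P : Submodule A E) :
    (span R (P : Set E) : Set E) ⊆ closure P := by
  have hA_smul : ∀ x ∈ closure (P : Set E), Set.MapsTo (· • x) (A : Set R) (closure P) :=
    fun x hx a ha => map_mem_closure (continuous_const_smul a) hx fun y hy => P.smul_mem ⟨a, ha⟩ hy
  let Q : Submodule R E :=
    { P.toAddSubmonoid.topologicalClosure with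
      smul_mem' := fun r x hx => by
        have := map_mem_closure (continuous_id.smul continuous_const) (hA r) (hA_smul x hx)
        rwa [closure_closure] at this }
  exact span_le (p := Q) |>.mpr subset_closure

theorem Matrix.mem_closure_mulVec_eq_of_dense {L m n : Type*} [Field L] [CharZero L]
    [TopologicalSpace L] [IsTopologicalRing L] [Fintype m] [Fintype n] {A : Subring L}
    (hA : Dense (A : Set L)) (M : Matrix m n ℚ) {x y : n → L} (hy : ∀ j, y j ∈ A)
    (hxy : M.map (↑) *ᵥ x = M.map (↑) *ᵥ y) :
    x ∈ closure {z | M.map (↑) *ᵥ z = M.map (↑) *ᵥ y ∧ ∀ j, z j ∈ A} := by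
  set W := LinearMap.ker (M.map ((↑) : ℚ → L)).mulVecLin
  let P : Submodule A (n → L) :=
    { carrier := {v | v ∈ W ∧ ∀ j, v j ∈ A}
      add_mem' := fun hv hw => ⟨W.add_mem hv.1 hw.1, fun j => A.add_mem (hv.2 j) (hw.2 j)⟩
      zero_mem' := ⟨W.zero_mem, fun _ => A.zero_mem⟩
      smul_mem' := fun a _ hv => ⟨W.smul_mem (a : L) hv.1, fun j => A.mul_mem a.2 (hv.2 j)⟩ }
  have hWP : (W : Set (n → L)) ⊆ closure P := by
    have hint : {v ∈ W | ∀ j, ∃ z : ℤ, v j = z} ⊆ P :=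
      fun v hv => ⟨hv.1, fun j => let ⟨z, hz⟩ := hv.2 j; hz ▸ intCast_mem A z⟩
    exact fun v hv => Submodule.span_subset_closure_of_dense hA P
      (Submodule.span_mono hint (M.ker_mulVecLin_map_ratCast_le_span_int hv))
  have hxy' : x - y ∈ W := by simp [W, mulVec_sub, hxy]
  have hmaps : Set.MapsTo (y + ·) (P : Set (n → L))
      {z | M.map (↑) *ᵥ z = M.map (↑) *ᵥ y ∧ ∀ j, z j ∈ A} := fun v hv =>
    ⟨by simp [mulVec_add, show M.map (↑) *ᵥ v = 0 from hv.1], fun j => A.add_mem (hy j) (hv.2 j)⟩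
  simpa using map_mem_closure (continuous_const_add y) (hWP hxy') hmaps

theorem lp_solution_in_dense_subring_iff_general
    (A : Subring ℝ) (hA : Dense (A : Set ℝ))
    (m n : ℕ)
    (M : Matrix (Fin m) (Fin n) ℚ) (b : Fin m → ℚ)
    (K : Set (Fin n → ℝ))
    (hK : K = {x : Fin n → ℝ | ∀ i : Fin m, ∑ j : Fin n, (M i j : ℝ) * x j ≤ (b i : ℝ)}) :
    (∃ x ∈ K, ∀ j, x j ∈ A) ↔
      (K.Nonempty ∧ ∃ x ∈ affineSpan ℝ K, ∀ j, x j ∈ A) := by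
  classical
  set N : Matrix (Fin m) (Fin n) ℝ := M.map (↑)
  have hle : ∀ x ∈ K, ∀ i, (N *ᵥ x) i ≤ b i := by rw [hK]; exact fun x hx => hx
  refine ⟨fun ⟨x, hxK, hxA⟩ => ⟨⟨x, hxK⟩, x, subset_affineSpan ℝ K hxK, hxA⟩, ?_⟩
  rintro ⟨hne, y, hy, hyA⟩
  set I : Set (Fin m) := {i | ∀ x ∈ K, (N *ᵥ x) i = b i}
  set J : Finset (Fin m) := Finset.univ.filter (· ∉ I)
  have hyI : ∀ i ∈ I, (N *ᵥ y) i = b i := fun i hi =>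
    (LinearMap.proj i ∘ₗ N.mulVecLin).toAffineMap.apply_eq_of_mem_affineSpan hi hy
  have hKconv : Convex ℝ K := by
    rw [hK, Set.ofPred_forall]
    exact convex_iInter fun i => convex_halfSpace_le (LinearMap.proj i ∘ₗ N.mulVecLin).isLinear _
  obtain ⟨x, hxK, hxJ⟩ := hKconv.exists_forall_lt_of_exists_lt hne J
    (fun i _ => (LinearMap.proj i ∘ₗ N.mulVecLin).convexOn hKconv) (fun i _ x hx => hle x hx i)
    fun i hi => by
      obtain ⟨x, hxK, hx⟩ : ∃ x ∈ K, (N *ᵥ x) i ≠ b i := by simpa [J, I] using hi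
      exact ⟨x, hxK, (hle x hxK i).lt_of_ne hx⟩
  have hcl := (M.submatrix ((↑) : I → Fin m) id).mem_closure_mulVec_eq_of_dense hA hyA
    (x := x) (funext fun i => (i.2 x hxK).trans (hyI i i.2).symm)
  have hU : IsOpen {z : Fin n → ℝ | ∀ i ∈ J, (N *ᵥ z) i < b i} := by
    simp only [Set.ofPred_forall]
    exact isOpen_biInter_finset fun i _ => isOpen_lt (by fun_prop) continuous_const
  obtain ⟨z, hzJ, hzI, hzA⟩ := mem_closure_iff.1 hcl _ hU hxJ
  refine ⟨z, hK ▸ fun i => ?_, hzA⟩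
  by_cases hi : i ∈ I
  · exact ((congrFun hzI ⟨i, hi⟩).trans (hyI i hi)).le
  · exact (hzJ i (by simpa [J] using hi)).le

/-- Feasibility of a rational linear program inside a dense subring `A` of `ℝ`:
the feasible region `K` contains a point with all coordinates in `A` if and only
if `K` is nonempty and the real affine span of `K` contains a point with all
coordinates in `A`. -/
theorem lp_solution_in_dense_subring_iff
    (A : Subring ℝ) (hA : Dense (A : Set ℝ))
    (m n : ℕ) (hm : 0 < m) (hn : 0 < n)
    (M : Matrix (Fin m) (Fin n) ℚ) (b : Fin m → ℚ)
    (K : Set (Fin n → ℝ))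
    (hK : K = {x : Fin n → ℝ | ∀ i : Fin m, ∑ j : Fin n, (M i j : ℝ) * x j ≤ (b i : ℝ)}) :
    (∃ x ∈ K, ∀ j, x j ∈ A) ↔
      (K.Nonempty ∧ ∃ x ∈ affineSpan ℝ K, ∀ j, x j ∈ A) :=
  lp_solution_in_dense_subring_iff_general A hA m n M b K hK
end

section
/- Let α₀ be a real number with 1/2 < α₀ < 2/3, and let p, q be real numbers with 0 ≤ p < q ≤ 1. Then there exists a finite set S of positive integers such that p < Σ_{i ∈ S} α₀^i < q. -/
open Classical in
noncomputable def greedySet (α₀ q : ℝ) : ℕ → Finset ℕ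
  | 0 => ∅
  | k + 1 =>
      if (∑ i ∈ greedySet α₀ q k, α₀ ^ i) + α₀ ^ (k + 1) < q then
        insert (k + 1) (greedySet α₀ q k)
      else greedySet α₀ q k

lemma greedy_bounds (α₀ q : ℝ) (h0 : 1 / 2 < α₀) (h1 : α₀ < 1)
    (hq : 0 < q) (hq1 : q ≤ 1) (k : ℕ) :
    (∀ i ∈ greedySet α₀ q k, 0 < i ∧ i ≤ k) ∧
      (∑ i ∈ greedySet α₀ q k, α₀ ^ i) < q ∧
      q - (∑ i ∈ greedySet α₀ q k, α₀ ^ i) ≤ α₀ ^ (k + 1) / (1 - α₀) := by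
  have hαpos : 0 < α₀ := by linarith
  have h1α : 0 < 1 - α₀ := by linarith
  induction k with
  | zero =>
      refine ⟨by simp [greedySet], ?_, ?_⟩
      · simp [greedySet, hq]
      · simp only [greedySet, Finset.sum_empty, sub_zero, pow_one]
        rw [le_div_iff₀ h1α, zero_add, pow_one]
        nlinarith [mul_le_mul_of_nonneg_right hq1 h1α.le]
  | succ k ih =>
      obtain ⟨hmem, hlt, htail⟩ := ih
      have hpow : 0 < α₀ ^ (k + 1) := pow_pos hαpos _
      have hnotmem : (k + 1) ∉ greedySet α₀ q k := fun h => by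
        have := (hmem _ h).2; omega
      by_cases hc : (∑ i ∈ greedySet α₀ q k, α₀ ^ i) + α₀ ^ (k + 1) < q
      · have hset : greedySet α₀ q (k + 1) = insert (k + 1) (greedySet α₀ q k) := by
          simp [greedySet, hc]
        have hsum : (∑ i ∈ greedySet α₀ q (k + 1), α₀ ^ i)
            = α₀ ^ (k + 1) + ∑ i ∈ greedySet α₀ q k, α₀ ^ i := by
          rw [hset, Finset.sum_insert hnotmem]
        refine ⟨?_, ?_, ?_⟩
        · intro i hi
          rw [hset, Finset.mem_insert] at hi
          rcases hi with rfl | hi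
          · omega
          · have := hmem i hi; omega
        · rw [hsum]; linarith
        · rw [hsum]
          have : α₀ ^ (k + 1) / (1 - α₀) - α₀ ^ (k + 1) = α₀ ^ (k + 1 + 1) / (1 - α₀) := by
            field_simp
            ring
          linarith
      · have hset : greedySet α₀ q (k + 1) = greedySet α₀ q k := by
          simp [greedySet, hc]
        refine ⟨?_, ?_, ?_⟩
        · intro i hi
          rw [hset] at hi
          have := hmem i hi; omega
        · rw [hset]; exact hlt
        · rw [hset]
          push_neg at hc
          have h2 : q - (∑ i ∈ greedySet α₀ q k, α₀ ^ i) ≤ α₀ ^ (k + 1) := by linarith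
          have h3 : α₀ ^ (k + 1) ≤ α₀ ^ (k + 1 + 1) / (1 - α₀) := by
            rw [le_div_iff₀ h1α, pow_succ α₀ (k + 1)]
            exact mul_le_mul_of_nonneg_left (by linarith) hpow.le
          linarith

/-- Binary-search lemma: for `1/2 < α₀ < 2/3` and `0 ≤ p < q ≤ 1`, there is a
finite set `S` of positive integers with `p < ∑_{i ∈ S} α₀ ^ i < q`. -/
theorem exists_finset_sum_pow_mem_interval
    (α₀ p q : ℝ) (hα₁ : 1 / 2 < α₀) (hα₂ : α₀ < 2 / 3)
    (hp : 0 ≤ p) (hpq : p < q) (hq : q ≤ 1) :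
    ∃ S : Finset ℕ, (∀ i ∈ S, 0 < i) ∧
      p < ∑ i ∈ S, α₀ ^ i ∧ ∑ i ∈ S, α₀ ^ i < q := by
  have hαpos : 0 ≤ α₀ := by linarith
  have h1 : α₀ < 1 := by linarith
  have h1α : 0 < 1 - α₀ := by linarith
  have hq0 : 0 < q := lt_of_le_of_lt hp hpq
  obtain ⟨n, hn⟩ := exists_pow_lt_of_lt_one (mul_pos (by linarith : (0:ℝ) < q - p) h1α) h1
  obtain ⟨hmem, hlt, htail⟩ := greedy_bounds α₀ q hα₁ h1 hq0 hq n
  refine ⟨greedySet α₀ q n, fun i hi => (hmem i hi).1, ?_, hlt⟩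
  have hpow : α₀ ^ (n + 1) ≤ α₀ ^ n := pow_le_pow_of_le_one hαpos h1.le (by omega)
  have : α₀ ^ (n + 1) / (1 - α₀) < q - p := by
    rw [div_lt_iff₀ h1α]
    calc α₀ ^ (n + 1) ≤ α₀ ^ n := hpow
      _ < (q - p) * (1 - α₀) := hn
  linarith
end

section
/- Let M ≥ 1 and m ≥ 1 be integers, let c : Fin m → ZMod M, let L be a natural number with L ≥ M·m and with (L : ZMod M) = Σ_i c_i, and let α : Fin m → ℝ satisfy α_i ≥ 0 for all i and Σ_i α_i = 1. Then there exist natural numbers w : Fin m → ℕ such that Σ_i w_i = L, such that (w_i : ZMod M) = c_i for every i, and such that |w_i − α_i·L| ≤ 2·M·m for every i. -/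
/-- Congruence-constrained weight lemma: for `L ≥ M·m` with `L ≡ ∑ cᵢ (mod M)`,
there are natural-number multiplicities `w` summing to `L`, in the prescribed
residue classes `cᵢ` modulo `M`, and approximating the convex weights `α` with
error at most `2·M·m` per coordinate. -/
theorem exists_integer_weights_approx_with_residues
    (M m : ℕ) (hM : 1 ≤ M) (hm : 1 ≤ m)
    (c : Fin m → ZMod M) (L : ℕ) (hL : M * m ≤ L)
    (hLc : (L : ZMod M) = ∑ i, c i)
    (α : Fin m → ℝ) (hα : ∀ i, 0 ≤ α i) (hsum : ∑ i, α i = 1) :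
    ∃ w : Fin m → ℕ, (∑ i, w i = L) ∧
      (∀ i, (w i : ZMod M) = c i) ∧
      (∀ i, |(w i : ℝ) - α i * L| ≤ 2 * M * m) := by
  haveI : NeZero M := ⟨by omega⟩
  classical
  set N : ℕ := L - M * m with hNdef
  have hNL : (N : ℝ) = (L : ℝ) - M * m := by
    have h := Nat.sub_add_cancel hL
    have : ((N + M * m : ℕ) : ℝ) = (L : ℝ) := by rw [h]
    push_cast at this
    linarith
  have hN0 : (0 : ℝ) ≤ N := Nat.cast_nonneg N
  -- extend α and c to ℕ
  set β : ℕ → ℝ := fun j => if h : j < m then α ⟨j, h⟩ else 0 with hβ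
  set γ : ℕ → ZMod M := fun j => if h : j < m then c ⟨j, h⟩ else 0 with hγ
  have hβ0 : ∀ j, 0 ≤ β j := by
    intro j; simp only [hβ]; split <;> simp [hα]
  -- cumulative real targets
  set P : ℕ → ℝ := fun i => (∑ j ∈ Finset.range i, β j) * N + i * M with hP
  set s : ℕ → ZMod M := fun i => ∑ j ∈ Finset.range i, γ j with hs
  set T : ℕ → ℕ := fun i => ⌈P i⌉₊ + (s i - (⌈P i⌉₊ : ZMod M)).val with hT
  have hP0 : ∀ i, 0 ≤ P i := by
    intro i
    have h1 : 0 ≤ ∑ j ∈ Finset.range i, β j := Finset.sum_nonneg fun j _ => hβ0 j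
    have : (0:ℝ) ≤ (i : ℝ) * M := by positivity
    have := mul_nonneg h1 hN0
    simp only [hP]; linarith
  have hTlb : ∀ i, P i ≤ (T i : ℝ) := by
    intro i
    have h1 : P i ≤ (⌈P i⌉₊ : ℝ) := Nat.le_ceil _
    have h2 : (⌈P i⌉₊ : ℝ) ≤ (T i : ℝ) := by
      simp only [hT]; push_cast
      exact le_add_of_nonneg_right (Nat.cast_nonneg _)
    linarith
  have hTub : ∀ i, (T i : ℝ) ≤ P i + M := by
    intro i
    have h1 : (⌈P i⌉₊ : ℝ) < P i + 1 := Nat.ceil_lt_add_one (hP0 i)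
    have h2 : (s i - (⌈P i⌉₊ : ZMod M)).val ≤ M - 1 :=
      Nat.le_sub_one_of_lt (ZMod.val_lt _)
    have h3 : ((s i - (⌈P i⌉₊ : ZMod M)).val : ℝ) ≤ (M : ℝ) - 1 := by
      have := (Nat.cast_le (α := ℝ)).mpr h2
      rwa [Nat.cast_sub hM, Nat.cast_one] at this
    simp only [hT]; push_cast
    linarith
  have hTcast : ∀ i, (T i : ZMod M) = s i := by
    intro i
    simp only [hT]; push_cast [ZMod.natCast_zmod_val]
    ring
  have hPstep : ∀ i, P (i + 1) = P i + β i * N + M := by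
    intro i
    simp only [hP, Finset.sum_range_succ]
    push_cast
    ring
  have hstep : ∀ i, T i ≤ T (i + 1) := by
    intro i
    have h1 : (T i : ℝ) ≤ (T (i+1) : ℝ) := by
      have := hTub i
      have := hTlb (i+1)
      have := hPstep i
      have hb : 0 ≤ β i * N := mul_nonneg (hβ0 i) hN0
      linarith
    exact_mod_cast h1
  have hmono : Monotone T := monotone_nat_of_le_succ hstep
  have hT0 : T 0 = 0 := by
    have hP0' : P 0 = 0 := by simp [hP]
    have hs0 : s 0 = 0 := by simp [hs]
    simp [hT, hP0', hs0]
  have hTm : T m = L := by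
    have hsumβ : ∑ j ∈ Finset.range m, β j = 1 := by
      rw [← hsum, ← Fin.sum_univ_eq_sum_range (fun j => β j) m]
      apply Finset.sum_congr rfl
      intro i _
      simp [hβ, i.isLt]
    have hPm : P m = L := by
      simp only [hP, hsumβ, one_mul, hNL]; ring
    have hQm : ⌈P m⌉₊ = L := by rw [hPm, Nat.ceil_natCast]
    have hsm : s m = (L : ZMod M) := by
      have h0 : s m = ∑ j ∈ Finset.range m, γ j := rfl
      rw [h0, hLc, ← Fin.sum_univ_eq_sum_range (fun j => γ j) m]
      exact Finset.sum_congr rfl fun i _ => by simp [hγ, i.isLt]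
    simp [hT, hQm, hsm]
  refine ⟨fun i => T (i + 1) - T i, ?_, ?_, ?_⟩
  · rw [Fin.sum_univ_eq_sum_range (fun j => T (j + 1) - T j) m,
      Finset.sum_range_tsub hmono, hT0, hTm]
    omega
  · intro i
    have h := hstep i.val
    have : ((T (i.val + 1) - T i.val : ℕ) : ZMod M) = (T (i.val+1) : ZMod M) - (T i.val : ZMod M) := by
      push_cast [Nat.cast_sub h]
      ring
    rw [this, hTcast, hTcast]
    simp only [hs, Finset.sum_range_succ]
    simp [hγ, i.isLt]
  · intro i
    have h := hstep i.val
    have hwr : ((T (i.val + 1) - T i.val : ℕ) : ℝ) = (T (i.val+1) : ℝ) - (T i.val : ℝ) := by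
      push_cast [Nat.cast_sub h]; ring
    have hβi : β i.val = α i := by simp [hβ, i.isLt]
    have h1 := hTub i.val
    have h2 := hTlb i.val
    have h3 := hTub (i.val + 1)
    have h4 := hTlb (i.val + 1)
    have h5 := hPstep i.val
    rw [hβi] at h5
    have hαle : α i ≤ 1 := by
      rw [← hsum]
      exact Finset.single_le_sum (fun j _ => hα j) (Finset.mem_univ i)
    have hα1 : 0 ≤ α i := hα i
    have hMm : (M : ℝ) ≤ (M : ℝ) * m := by
      have h1 : (1:ℝ) ≤ m := by exact_mod_cast hm
      nlinarith [Nat.cast_nonneg (α := ℝ) M]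
    have hMm0 : (0:ℝ) ≤ (M : ℝ) * m := by positivity
    have hαMm : α i * ((M:ℝ) * m) ≤ (M : ℝ) * m :=
      mul_le_of_le_one_left hMm0 hαle
    have hαMm0 : (0:ℝ) ≤ α i * ((M:ℝ) * m) := mul_nonneg hα1 hMm0
    have hkey : α i * (N:ℝ) = α i * L - α i * ((M:ℝ)*m) := by rw [hNL]; ring
    rw [hwr, abs_le]
    constructor
    · linarith
    · linarith
end

section
/- Let M ≥ 1 and n ≥ 1 be integers, let P be a nonempty finite subset of (ZMod M)^n, and let W be a point of the affine span of P over the ring ZMod M (i.e., W = Σ_j r_j·p_j for some finitely many p_j ∈ P and coefficients r_j ∈ ZMod M with Σ_j r_j = 1). Then for every natural number L with L ≥ M·|P| and (L : ZMod M) = 1, there exists a function x : Fin L → (ZMod M)^n with x(i) ∈ P for every i and Σ_{i} x(i) = W. -/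
/-!
Write `W = ∑ c q • q` with `∑ c q = 1` in `ZMod M`. Lifting each `c q` to its representative in
`[0, M)` gives natural multiplicities of total `S ≤ M·|P| ≤ L` with `S ≡ 1 ≡ L (mod M)`; the
remaining `L - S` summands are copies of one fixed point of `P`, which add up to `0` because
`M ∣ L - S`. Listing every point with its multiplicity gives the required `L` summands.
-/

open Finset

theorem exists_fin_sum_eq_sum_nsmul {ι V : Type*} [Fintype ι] [AddCommMonoid V]
    (f : ι → V) (a : ι → ℕ) {L : ℕ} (ha : ∑ j, a j = L) :
    ∃ x : Fin L → ι, ∑ i, f (x i) = ∑ j, a j • f j := by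
  have hcard : Fintype.card (Σ j, Fin (a j)) = L := by simp [ha]
  let e : Fin L ≃ Σ j, Fin (a j) := (Fintype.equivFinOfCardEq hcard).symm
  refine ⟨fun i => (e i).1, ?_⟩
  rw [e.sum_comp (fun σ => f σ.1), Fintype.sum_sigma]
  simp

theorem ZMod.exists_natCast_eq_of_sum_le {ι : Type*} [Fintype ι] [Nonempty ι]
    {M : ℕ} [NeZero M] (c : ι → ZMod M) {L : ℕ} (hL : M * Fintype.card ι ≤ L)
    (hLc : (L : ZMod M) = ∑ j, c j) :
    ∃ a : ι → ℕ, ∑ j, a j = L ∧ ∀ j, (a j : ZMod M) = c j := by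
  classical
  obtain ⟨j₀⟩ := ‹Nonempty ι›
  set S := ∑ j, (c j).val
  have hSL : S ≤ L :=
    calc S ≤ ∑ _j : ι, M := sum_le_sum fun j _ => (c j).val_lt.le
      _ ≤ L := by simpa [mul_comm] using hL
  have hS : (S : ZMod M) = ∑ j, c j := by simp [S]
  have hpad : ((L - S : ℕ) : ZMod M) = 0 := by rw [Nat.cast_sub hSL, hLc, hS, sub_self]
  refine ⟨fun j => (c j).val + if j = j₀ then L - S else 0, ?_, fun j => ?_⟩
  · rw [sum_add_distrib, sum_ite_eq' univ j₀, if_pos (mem_univ _)]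
    omega
  · dsimp only
    split_ifs <;> simp [hpad]

theorem Finset.exists_sum_eq_one_of_mem_affineSpan {k V : Type*} [Ring k] [AddCommGroup V]
    [Module k V] {P : Finset V} {W : V} (hW : W ∈ affineSpan k (P : Set V)) :
    ∃ c : P → k, ∑ q, c q = 1 ∧ ∑ q, c q • (q : V) = W := by
  rw [← Subtype.range_coe (s := (P : Set V))] at hW
  obtain ⟨c, hc, rfl⟩ := eq_affineCombination_of_mem_affineSpan_of_fintype hW
  exact ⟨c, hc, (univ.affineCombination_eq_linear_combination _ c hc).symm⟩

theorem affineSpan_point_eq_sum_of_elements_general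
    (M n : ℕ) (hM : 1 ≤ M)
    (P : Finset (Fin n → ZMod M)) (hP : P.Nonempty)
    (W : Fin n → ZMod M)
    (hW : W ∈ affineSpan (ZMod M) (P : Set (Fin n → ZMod M)))
    (L : ℕ) (hL : M * P.card ≤ L) (hL1 : (L : ZMod M) = 1) :
    ∃ x : Fin L → (Fin n → ZMod M),
      (∀ i, x i ∈ P) ∧ ∑ i, x i = W := by
  have : NeZero M := ⟨by omega⟩
  have : Nonempty P := hP.to_subtype
  obtain ⟨c, hc, hcW⟩ := P.exists_sum_eq_one_of_mem_affineSpan hW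
  obtain ⟨a, haL, hac⟩ :=
    ZMod.exists_natCast_eq_of_sum_le c (by rwa [Fintype.card_coe]) (hL1.trans hc.symm)
  obtain ⟨x, hx⟩ := exists_fin_sum_eq_sum_nsmul (fun q : P => (q : Fin n → ZMod M)) a haL
  refine ⟨fun i => x i, fun i => (x i).2, ?_⟩
  rw [hx, ← hcW]
  simp only [← hac, Nat.cast_smul_eq_nsmul]

/-- A point of the affine span over `ZMod M` of a nonempty finite set
`P ⊆ (ZMod M)^n` is realized as the sum of `L` elements of `P`, for any
`L ≥ M·|P|` with `L ≡ 1 (mod M)`. -/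
theorem affineSpan_point_eq_sum_of_elements
    (M n : ℕ) (hM : 1 ≤ M) (hn : 1 ≤ n)
    (P : Finset (Fin n → ZMod M)) (hP : P.Nonempty)
    (W : Fin n → ZMod M)
    (hW : W ∈ affineSpan (ZMod M) (P : Set (Fin n → ZMod M)))
    (L : ℕ) (hL : M * P.card ≤ L) (hL1 : (L : ZMod M) = 1) :
    ∃ x : Fin L → (Fin n → ZMod M),
      (∀ i, x i ∈ P) ∧ ∑ i, x i = W :=
  affineSpan_point_eq_sum_of_elements_general M n hM P hP W hW L hL hL1
end

section
/- Let L be an odd positive integer and let x : Fin L → Fin 6 → Bool be such that every row has exactly 3 coordinates equal to true. For each column j ∈ Fin 6 let c_j denote the number of indices i with x(i)(j) = true, and define y_j ∈ ℕ by: y_j = 0 if 2·c_j < L and c_j is even; y_j = 3 if 2·c_j < L and c_j is odd; y_j = 2 if 2·c_j > L and c_j is even; y_j = 1 if 2·c_j > L and c_j is odd. Then: (a) there exists a column j with 2·c_j > L (so y is not entirely contained in {0,3}); (b) there exists a column j with 2·c_j < L (so y is not entirely contained in {1,2}); and (c) Σ_{j ∈ Fin 6} y_j is odd. -/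
/-- The paper's didactic example: for odd `L`, if every row of `x : Fin L → Fin 6 → Bool`
has exactly `3` true coordinates, then with `c_j` the column counts and `y_j` defined by
the four threshold/parity cases, the output `y` hits both the high region and the low
region, and has odd coordinate sum. -/
theorem didactic_example_polymorphism
    (L : ℕ) (hodd : Odd L) (hpos : 0 < L)
    (x : Fin L → Fin 6 → Bool)
    (hx : ∀ i : Fin L, (Finset.univ.filter fun j : Fin 6 => x i j = true).card = 3)
    (c : Fin 6 → ℕ)
    (hc : ∀ j, c j = (Finset.univ.filter fun i : Fin L => x i j = true).card)
    (y : Fin 6 → ℕ)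
    (hy0 : ∀ j, 2 * c j < L → Even (c j) → y j = 0)
    (hy3 : ∀ j, 2 * c j < L → Odd (c j) → y j = 3)
    (hy2 : ∀ j, L < 2 * c j → Even (c j) → y j = 2)
    (hy1 : ∀ j, L < 2 * c j → Odd (c j) → y j = 1) :
    (∃ j, L < 2 * c j) ∧ (∃ j, 2 * c j < L) ∧ Odd (∑ j, y j) := by
  have hsum : ∑ j, c j = 3 * L := by
    have : ∑ j : Fin 6, c j = ∑ j : Fin 6, ∑ i : Fin L, if x i j = true then 1 else 0 := by
      refine Finset.sum_congr rfl fun j _ => ?_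
      rw [hc, Finset.card_filter]
    rw [this, Finset.sum_comm]
    have : ∀ i : Fin L, (∑ j : Fin 6, if x i j = true then 1 else 0) = 3 := by
      intro i
      rw [← Finset.card_filter]
      exact hx i
    simp [this, mul_comm]
  have hne : ∀ j, 2 * c j ≠ L := by
    intro j h
    rcases hodd with ⟨k, hk⟩
    omega
  have ha : ∃ j, L < 2 * c j := by
    by_contra h
    push_neg at h
    have hlt : ∀ j : Fin 6, 2 * c j < L := fun j => lt_of_le_of_ne (h j) (hne j)
    have : ∑ j : Fin 6, 2 * c j < ∑ _j : Fin 6, L :=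
      Finset.sum_lt_sum_of_nonempty Finset.univ_nonempty (fun j _ => hlt j)
    rw [← Finset.mul_sum, hsum] at this
    simp at this
    omega
  have hb : ∃ j, 2 * c j < L := by
    by_contra h
    push_neg at h
    have hlt : ∀ j : Fin 6, L < 2 * c j := fun j => lt_of_le_of_ne (h j) (Ne.symm (hne j))
    have : ∑ _j : Fin 6, L < ∑ j : Fin 6, 2 * c j :=
      Finset.sum_lt_sum_of_nonempty Finset.univ_nonempty (fun j _ => hlt j)
    rw [← Finset.mul_sum, hsum] at this
    simp at this
    omega
  refine ⟨ha, hb, ?_⟩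
  have hyc : ∀ j, y j % 2 = c j % 2 := by
    intro j
    rcases lt_trichotomy (2 * c j) L with h | h | h
    · rcases Nat.even_or_odd (c j) with he | ho
      · rw [hy0 j h he]; rw [Nat.even_iff] at he; omega
      · rw [hy3 j h ho]; rw [Nat.odd_iff] at ho; omega
    · exact absurd h (hne j)
    · rcases Nat.even_or_odd (c j) with he | ho
      · rw [hy2 j h he]; rw [Nat.even_iff] at he; omega
      · rw [hy1 j h ho]; rw [Nat.odd_iff] at ho; omega
  rw [Nat.odd_iff, Finset.sum_nat_mod]
  have : ∑ j : Fin 6, y j % 2 = ∑ j : Fin 6, c j % 2 := by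
    exact Finset.sum_congr rfl fun j _ => hyc j
  rw [this, ← Finset.sum_nat_mod, hsum]
  rcases hodd with ⟨k, hk⟩
  omega
end

section
/- Let k ≥ 1 be an integer and let x : Fin (2k−1) → Fin (2k+1) → Bool be such that every row has at least k coordinates equal to true. Then there exists a column j ∈ Fin (2k+1) such that the number of rows i with x(i)(j) = true is strictly greater than (2k−1)/2, i.e., at least k; in particular the coordinatewise majority of the 2k−1 rows is not the all-false string. -/
/-- `MAJ_{2k−1}` is a polymorphism of the `(2+ε)`-SAT template: if each of the
`2k−1` rows of `x` has at least `k` true coordinates among `2k+1`, then some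
column is true in strictly more than `(2k−1)/2` rows, i.e. in at least `k` rows. -/
theorem majority_polymorphism_two_plus_eps_sat
    (k : ℕ) (hk : 1 ≤ k)
    (x : Fin (2 * k - 1) → Fin (2 * k + 1) → Bool)
    (hx : ∀ i, k ≤ (Finset.univ.filter fun j : Fin (2 * k + 1) => x i j = true).card) :
    ∃ j : Fin (2 * k + 1),
      2 * k - 1 < 2 * (Finset.univ.filter fun i : Fin (2 * k - 1) => x i j = true).card ∧
      k ≤ (Finset.univ.filter fun i : Fin (2 * k - 1) => x i j = true).card := by
  have key : ∃ j : Fin (2 * k + 1),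
      k ≤ (Finset.univ.filter fun i : Fin (2 * k - 1) => x i j = true).card := by
    by_contra h
    push_neg at h
    have hswap :
        (∑ i : Fin (2 * k - 1),
            (Finset.univ.filter fun j : Fin (2 * k + 1) => x i j = true).card)
        = ∑ j : Fin (2 * k + 1),
            (Finset.univ.filter fun i : Fin (2 * k - 1) => x i j = true).card := by
      simp only [Finset.card_filter]
      exact Finset.sum_comm
    have hlo : (2 * k - 1) * k ≤ ∑ i : Fin (2 * k - 1),
        (Finset.univ.filter fun j : Fin (2 * k + 1) => x i j = true).card := by
      calc (2 * k - 1) * k = ∑ _i : Fin (2 * k - 1), k := by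
            simp [Finset.sum_const, Finset.card_univ]
        _ ≤ _ := Finset.sum_le_sum fun i _ => hx i
    have hhi : (∑ j : Fin (2 * k + 1),
        (Finset.univ.filter fun i : Fin (2 * k - 1) => x i j = true).card)
        ≤ (2 * k + 1) * (k - 1) := by
      calc _ ≤ ∑ _j : Fin (2 * k + 1), (k - 1) :=
            Finset.sum_le_sum fun j _ => Nat.le_sub_one_of_lt (h j)
        _ = (2 * k + 1) * (k - 1) := by
            simp [Finset.sum_const, Finset.card_univ]
    rw [hswap] at hlo
    have hcon : (2 * k - 1) * k ≤ (2 * k + 1) * (k - 1) := hlo.trans hhi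
    obtain ⟨m, rfl⟩ : ∃ m, k = m + 1 := ⟨k - 1, by omega⟩
    rw [show 2 * (m + 1) - 1 = 2 * m + 1 from by omega,
        show m + 1 - 1 = m from by omega] at hcon
    nlinarith [hcon]
  obtain ⟨j, hj⟩ := key
  exact ⟨j, by omega, hj⟩
end

section
/- Let L be an odd positive integer, let n ≥ 2 and let ℓ be an integer with 1 ≤ ℓ ≤ n−1. Let x : Fin L → Fin n → {0,1} ⊆ ℤ be such that every row has exactly ℓ coordinates equal to 1. For each column j define a_j = Σ_{i=0}^{L−1} (−1)^i · x(i)(j) ∈ ℤ (the alternating sum down column j, starting with sign +), and define y_j = 1 if a_j ≥ 1 and y_j = 0 otherwise. Then there exists a column j with y_j = 1 and there exists a column j with y_j = 0. -/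
/-- The alternating-threshold function `MALT_L` is a polymorphism of the
hitting-set promise template: if each of the `L` rows (`L` odd) of a `0/1`
integer matrix has exactly `ℓ` ones, `1 ≤ ℓ ≤ n−1`, then the output `y`
(with `y_j = 1` iff the alternating column sum `a_j` is at least `1`) is
neither all-zero nor all-one. -/
theorem malt_polymorphism_hitting_set
    (L : ℕ) (hodd : Odd L) (hpos : 0 < L)
    (n : ℕ) (hn : 2 ≤ n) (ℓ : ℕ) (hℓ1 : 1 ≤ ℓ) (hℓn : ℓ ≤ n - 1)
    (x : Fin L → Fin n → ℤ)
    (hx01 : ∀ i j, x i j = 0 ∨ x i j = 1)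
    (hrow : ∀ i : Fin L, (Finset.univ.filter fun j : Fin n => x i j = 1).card = ℓ)
    (a : Fin n → ℤ)
    (ha : ∀ j, a j = ∑ i : Fin L, (-1 : ℤ) ^ (i : ℕ) * x i j)
    (y : Fin n → ℤ)
    (hy : ∀ j, y j = if 1 ≤ a j then 1 else 0) :
    (∃ j, y j = 1) ∧ (∃ j, y j = 0) := by
  -- each row sums to ℓ
  have hrowsum : ∀ i : Fin L, ∑ j : Fin n, x i j = (ℓ : ℤ) := by
    intro i
    have : ∑ j : Fin n, x i j = ∑ j : Fin n, (if x i j = 1 then (1 : ℤ) else 0) := by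
      apply Finset.sum_congr rfl
      intro j _
      rcases hx01 i j with h | h <;> simp [h]
    rw [this, Finset.sum_boole, hrow i]
  -- total sum of a is ℓ
  have htot : ∑ j : Fin n, a j = (ℓ : ℤ) := by
    have : ∑ j : Fin n, a j = ∑ i : Fin L, (-1 : ℤ) ^ (i : ℕ) * ∑ j : Fin n, x i j := by
      simp only [ha, Finset.mul_sum]
      rw [Finset.sum_comm]
    rw [this]
    have hsigns : ∑ i : Fin L, (-1 : ℤ) ^ (i : ℕ) = 1 := by
      rw [Fin.sum_univ_eq_sum_range]
      rw [neg_one_geom_sum]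
      simp [Nat.not_even_iff_odd.mpr hodd]
    calc ∑ i : Fin L, (-1 : ℤ) ^ (i : ℕ) * ∑ j : Fin n, x i j
        = ∑ i : Fin L, (-1 : ℤ) ^ (i : ℕ) * (ℓ : ℤ) := by
          exact Finset.sum_congr rfl fun i _ => by rw [hrowsum i]
      _ = (∑ i : Fin L, (-1 : ℤ) ^ (i : ℕ)) * (ℓ : ℤ) := by rw [Finset.sum_mul]
      _ = (ℓ : ℤ) := by rw [hsigns, one_mul]
  constructor
  · -- some a j ≥ 1
    by_contra h
    push_neg at h
    have hall : ∀ j : Fin n, a j ≤ 0 := by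
      intro j
      by_contra hj
      push_neg at hj
      have : 1 ≤ a j := hj
      exact h j (by rw [hy j, if_pos this])
    have : ∑ j : Fin n, a j ≤ 0 := Finset.sum_nonpos fun j _ => hall j
    rw [htot] at this
    have h1 : (1 : ℤ) ≤ (ℓ : ℤ) := by exact_mod_cast hℓ1
    omega
  · -- some a j ≤ 0
    by_contra h
    push_neg at h
    have hall : ∀ j : Fin n, 1 ≤ a j := by
      intro j
      by_contra hj
      push_neg at hj
      have hlt : ¬ (1 ≤ a j) := by omega
      exact h j (by rw [hy j, if_neg hlt])
    have hge : (n : ℤ) ≤ ∑ j : Fin n, a j := by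
      calc (n : ℤ) = ∑ _j : Fin n, (1 : ℤ) := by simp
        _ ≤ ∑ j : Fin n, a j := Finset.sum_le_sum fun j _ => hall j
    rw [htot] at hge
    have : ℓ < n := by omega
    exact absurd hge (by exact_mod_cast not_le.mpr this)
end

section
/- Let n ≥ 1, let P be a nonempty finite subset of {0,1}^n ⊆ ℝ^n, and let V ∈ ℝ^n lie in the convex hull of P. Then for every positive integer L there exists a function x : Fin L → ℝ^n with x(i) ∈ P for every i such that for every coordinate j, |(1/L)·Σ_{i} x(i)_j − V_j| ≤ |P|/L. -/
/-!
Write `V = ∑ w_p p` with convex weights. Rounding the numbers `L w_p` to natural numbers `m_p`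
with `∑ m_p = L` and `|m_p - L w_p| ≤ 1` (floors, plus one for `L - ∑ ⌊L w_p⌋ ≤ |P|` of the
points), and listing each `p` exactly `m_p` times, the `j`-th coordinate of `L` times the
average differs from `L V_j` by `∑ (m_p - L w_p) p_j`, which is at most `|P|` in absolute value
because `|p_j| ≤ 1`.
-/

open Finset

theorem Finset.exists_nat_sum_eq_abs_sub_le_one {ι : Type*} (s : Finset ι) {c : ι → ℝ}
    (hc : ∀ p ∈ s, 0 ≤ c p) {L : ℕ} (hsum : ∑ p ∈ s, c p = L) :
    ∃ m : ι → ℕ, ∑ p ∈ s, m p = L ∧ ∀ p ∈ s, |(m p : ℝ) - c p| ≤ 1 := by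
  classical
  set k : ι → ℕ := fun p => ⌊c p⌋₊
  have hfloor : ∀ p ∈ s, (k p : ℝ) ≤ c p ∧ c p < k p + 1 := fun p hp =>
    ⟨Nat.floor_le (hc p hp), Nat.lt_floor_add_one _⟩
  have hk : ∑ p ∈ s, k p ≤ L := by
    have : ∑ p ∈ s, (k p : ℝ) ≤ L := hsum ▸ sum_le_sum fun p hp => (hfloor p hp).1
    exact_mod_cast this
  have hrem : L - ∑ p ∈ s, k p ≤ s.card := by
    have : ((L - ∑ p ∈ s, k p : ℕ) : ℝ) ≤ s.card := by
      rw [Nat.cast_sub hk, Nat.cast_sum, ← hsum, ← sum_sub_distrib, card_eq_sum_ones,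
        Nat.cast_sum, Nat.cast_one]
      exact sum_le_sum fun p hp => by linarith [hfloor p hp]
    exact_mod_cast this
  obtain ⟨t, hts, htcard⟩ := exists_subset_card_eq hrem
  refine ⟨fun p => k p + if p ∈ t then 1 else 0, ?_, fun p hp => ?_⟩
  · rw [sum_add_distrib, sum_boole, filter_mem_eq_inter, inter_eq_right.2 hts, htcard,
      Nat.cast_id]
    omega
  · dsimp only
    rw [abs_le]
    split_ifs <;> push_cast <;> constructor <;> linarith [hfloor p hp]

theorem Finset.exists_fin_tuple_sum_eq_sum_nsmul {ι M : Type*} [AddCommMonoid M]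
    (s : Finset ι) (m : ι → ℕ) {L : ℕ} (hL : ∑ p ∈ s, m p = L) :
    ∃ x : Fin L → ι, (∀ i, x i ∈ s) ∧ ∀ f : ι → M, ∑ i, f (x i) = ∑ p ∈ s, m p • f p := by
  let e : (Σ p : s, Fin (m p)) ≃ Fin L := Fintype.equivFinOfCardEq <| by
    simp only [Fintype.card_sigma, Fintype.card_fin, ← hL]
    exact sum_coe_sort s m
  refine ⟨fun i => (e.symm i).1, fun i => (e.symm i).1.2, fun f => ?_⟩
  rw [e.symm.sum_comp (fun σ => f σ.1), Fintype.sum_sigma]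
  simp only [sum_const, card_univ, Fintype.card_fin]
  exact sum_coe_sort s fun p => m p • f p

theorem convexHull_point_approx_by_average_general
    (n : ℕ)
    (P : Finset (Fin n → ℝ))
    (hP01 : ∀ p ∈ P, ∀ j, p j = 0 ∨ p j = 1)
    (V : Fin n → ℝ) (hV : V ∈ convexHull ℝ (P : Set (Fin n → ℝ)))
    (L : ℕ) (hL : 0 < L) :
    ∃ x : Fin L → (Fin n → ℝ), (∀ i, x i ∈ P) ∧
      ∀ j, |(1 / (L : ℝ)) * ∑ i, x i j - V j| ≤ (P.card : ℝ) / L := by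
  obtain ⟨w, hw0, hw1, rfl⟩ := mem_convexHull'.1 hV
  obtain ⟨m, hmL, hm⟩ := P.exists_nat_sum_eq_abs_sub_le_one (c := fun p => L * w p)
    (fun p hp => mul_nonneg L.cast_nonneg (hw0 p hp)) (by rw [← mul_sum, hw1, mul_one])
  obtain ⟨x, hxP, hxsum⟩ := P.exists_fin_tuple_sum_eq_sum_nsmul (M := ℝ) m hmL
  refine ⟨x, hxP, fun j => ?_⟩
  have hcoord : ∀ p ∈ P, |p j| ≤ 1 := fun p hp => by rcases hP01 p hp j with h | h <;> simp [h]
  have herr : |∑ p ∈ P, ((m p : ℝ) - L * w p) * p j| ≤ P.card := calc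
    _ ≤ ∑ p ∈ P, |((m p : ℝ) - L * w p) * p j| := abs_sum_le_sum_abs _ _
    _ ≤ ∑ _p ∈ P, (1 : ℝ) := sum_le_sum fun p hp => by
      rw [abs_mul]; exact mul_le_one₀ (hm p hp) (abs_nonneg _) (hcoord p hp)
    _ = P.card := by simp
  have hLpos : (0 : ℝ) < L := by exact_mod_cast hL
  have hdev : (1 / (L : ℝ)) * ∑ i, x i j - (∑ p ∈ P, w p • p) j
      = (∑ p ∈ P, ((m p : ℝ) - L * w p) * p j) / L := by
    rw [hxsum (· j), Finset.sum_apply]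
    simp only [Pi.smul_apply, smul_eq_mul, nsmul_eq_mul, sub_mul, sum_sub_distrib,
      mul_assoc, ← mul_sum]
    field_simp
  rw [hdev, abs_div, abs_of_pos hLpos]
  gcongr

/-- Discretization of a convex-hull point: any `V` in the convex hull of a
nonempty finite set `P` of `0/1`-vectors in `ℝ^n` is approximated in each
coordinate, with error at most `|P|/L`, by the average of `L` points of `P`. -/
theorem convexHull_point_approx_by_average
    (n : ℕ) (hn : 1 ≤ n)
    (P : Finset (Fin n → ℝ)) (hP : P.Nonempty)
    (hP01 : ∀ p ∈ P, ∀ j, p j = 0 ∨ p j = 1)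
    (V : Fin n → ℝ) (hV : V ∈ convexHull ℝ (P : Set (Fin n → ℝ)))
    (L : ℕ) (hL : 0 < L) :
    ∃ x : Fin L → (Fin n → ℝ), (∀ i, x i ∈ P) ∧
      ∀ j, |(1 / (L : ℝ)) * ∑ i, x i j - V j| ≤ (P.card : ℝ) / L :=
  convexHull_point_approx_by_average_general n P hP01 V hV L hL
end

section
/- Let n ≥ 1 and M ≥ 1 be integers, let P be a nonempty finite subset of {0,1}^n ⊆ ℝ^n, let V ∈ ℝ^n lie in the convex hull of P over ℝ, and let W ∈ (ZMod M)^n lie in the affine span over ZMod M of the image of P under the coordinatewise reduction map {0,1}^n → (ZMod M)^n. Then for every ε > 0 there exists L₀ such that for every natural number L ≥ L₀ with (L : ZMod M) = 1, there exists x : Fin L → ℝ^n with x(i) ∈ P for every i, satisfying both |(1/L)·Σ_i x(i)_j − V_j| ≤ ε for every coordinate j, and Σ_i x(i) ≡ W coordinatewise modulo M (i.e., the reduction of the integer vector Σ_i x(i) modulo M equals W). -/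
/-!
Write `V = ∑ w_p • p` as a convex combination and `W = ∑ t_p • φ p` with natural coefficients
`t_p`, `∑ t_p ≡ 1 (mod M)`. If `L ≡ 1 (mod M)` and `L ≥ ∑ t_p`, then `L = ∑ t_p + M m`; taking
each `p` with multiplicity `c_p = t_p + M r_p`, where `r` rounds `m w` to integers summing to `m`,
gives `L` points whose `φ`-sum is `W`, and whose sum differs from `L • V` by a bound independent
of `L`. Their average is therefore within `O(1/L)` of `V`.
-/

open Finset

theorem exists_natCast_weights_of_mem_affineSpan_image {M : ℕ} [NeZero M] {ι F : Type*}
    [AddCommGroup F] [Module (ZMod M) F] {s : Finset ι} {f : ι → F} {W : F}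
    (hW : W ∈ affineSpan (ZMod M) (f '' s)) :
    ∃ t : ι → ℕ, ((∑ i ∈ s, t i : ℕ) : ZMod M) = 1 ∧ ∑ i ∈ s, (t i : ZMod M) • f i = W := by
  classical
  obtain ⟨u, w, hus, hw1, rfl⟩ := eq_affineCombination_of_mem_affineSpan_image hW
  have hsu : s ∩ u = u := inter_eq_right.mpr (mod_cast hus)
  refine ⟨fun i => if i ∈ u then (w i).val else 0, ?_, ?_⟩
  · simp [sum_ite_mem, hsu, hw1]
  · simp [apply_ite, ite_smul, sum_ite_mem, hsu, affineCombination_eq_linear_combination u f w hw1]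

theorem exists_nat_sum_eq_abs_sub_mul_le {ι : Type*} {s : Finset ι} {w : ι → ℝ}
    (hw0 : ∀ i ∈ s, 0 ≤ w i) (hw1 : ∑ i ∈ s, w i = 1) (m : ℕ) :
    ∃ r : ι → ℕ, ∑ i ∈ s, r i = m ∧ ∀ i ∈ s, |(r i : ℝ) - m * w i| ≤ #s := by
  classical
  obtain ⟨i₀, hi₀⟩ := nonempty_of_sum_ne_zero (hw1.symm ▸ one_ne_zero)
  have hfloor : ∀ i ∈ s, 0 ≤ m * w i - ⌊m * w i⌋₊ ∧ m * w i - ⌊m * w i⌋₊ < 1 := fun i hi =>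
    ⟨sub_nonneg.mpr (Nat.floor_le (by have := hw0 i hi; positivity)),
      sub_lt_iff_lt_add'.mpr (Nat.lt_floor_add_one _)⟩
  set S := ∑ i ∈ s.erase i₀, ⌊m * w i⌋₊
  -- round down everywhere except at `i₀`, which absorbs the whole rounding defect
  have hdefect : (m : ℝ) - S - m * w i₀ = ∑ i ∈ s.erase i₀, (m * w i - ⌊m * w i⌋₊) := by
    rw [← add_sum_erase s w hi₀] at hw1
    rw [sum_sub_distrib, ← mul_sum]
    push_cast [S]
    linear_combination (-(m : ℝ)) * hw1
  have hdefect_nonneg : 0 ≤ (m : ℝ) - S - m * w i₀ :=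
    hdefect ▸ sum_nonneg fun i hi => (hfloor i (mem_of_mem_erase hi)).1
  have hdefect_le : (m : ℝ) - S - m * w i₀ ≤ #s := by
    calc _ ≤ ∑ i ∈ s.erase i₀, (1 : ℝ) :=
          hdefect ▸ sum_le_sum fun i hi => (hfloor i (mem_of_mem_erase hi)).2.le
      _ ≤ #s := by simpa using card_erase_le
  have hSm : S ≤ m := by
    have := hw0 i₀ hi₀
    exact_mod_cast (show (S : ℝ) ≤ m by nlinarith)
  refine ⟨Function.update (fun i => ⌊m * w i⌋₊) i₀ (m - S), ?_, fun i hi => ?_⟩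
  · rw [sum_update_of_mem hi₀, sdiff_singleton_eq_erase]
    omega
  · rcases eq_or_ne i i₀ with rfl | hne
    · rw [Function.update_self, Nat.cast_sub hSm, abs_le]
      constructor <;> linarith
    · have hs : (1 : ℝ) ≤ #s := by exact_mod_cast card_pos.mpr ⟨i, hi⟩
      rw [Function.update_of_ne hne, abs_le]
      constructor <;> linarith [hfloor i hi]

theorem exists_counts_modEq_abs_sub_mul_le {M : ℕ} {ι : Type*} {s : Finset ι} {w : ι → ℝ}
    (hw0 : ∀ i ∈ s, 0 ≤ w i) (hw1 : ∑ i ∈ s, w i = 1) (t : ι → ℕ) {L : ℕ}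
    (hL : ∑ i ∈ s, t i ≤ L) (hLM : (L : ZMod M) = ∑ i ∈ s, t i) :
    ∃ c : ι → ℕ, ∑ i ∈ s, c i = L ∧ (∀ i, (c i : ZMod M) = t i) ∧
      ∀ i ∈ s, |(c i : ℝ) - L * w i| ≤ ∑ i ∈ s, t i + M * #s := by
  set A := ∑ i ∈ s, t i
  obtain ⟨m, hm⟩ : M ∣ L - A :=
    (Nat.modEq_iff_dvd' hL).mp ((ZMod.natCast_eq_natCast_iff _ _ _).mp (mod_cast hLM.symm))
  obtain ⟨r, hr_sum, hr⟩ := exists_nat_sum_eq_abs_sub_mul_le hw0 hw1 m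
  refine ⟨fun i => t i + M * r i, ?_, fun i => by simp, fun i hi => ?_⟩
  · rw [sum_add_distrib, ← mul_sum, hr_sum, ← hm]
    omega
  have hLA : (L : ℝ) = A + M * m := by exact_mod_cast (by omega : L = A + M * m)
  have htA : (t i : ℝ) ≤ A := by exact_mod_cast single_le_sum (fun j _ => Nat.zero_le (t j)) hi
  have hw_le : w i ≤ 1 := hw1 ▸ single_le_sum hw0 hi
  have hMr : |(M : ℝ) * (r i - m * w i)| ≤ M * #s := by
    rw [abs_mul, Nat.abs_cast]
    exact mul_le_mul_of_nonneg_left (hr i hi) M.cast_nonneg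
  have := hw0 i hi
  rw [abs_le] at hMr ⊢
  push_cast [hLA]
  constructor <;> nlinarith [hMr.1, hMr.2]

theorem exists_map_univ_val_eq {α : Type*} (m : Multiset α) {L : ℕ} (hm : Multiset.card m = L) :
    ∃ x : Fin L → α, univ.val.map x = m := by
  subst hm
  refine ⟨fun i => m.toList[i.1]'(by simp), ?_⟩
  conv_rhs => rw [← m.coe_toList]
  rw [Fin.univ_val_map, Multiset.coe_eq_coe]
  exact List.Perm.of_eq (List.ext_getElem (by simp) fun _ _ _ => by simp)

theorem sum_comp_eq_sum_nsmul_of_map_univ_val_eq {ι α β : Type*} [Fintype ι] [AddCommMonoid β]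
    {x : ι → α} {s : Finset α} {c : α → ℕ}
    (hx : univ.val.map x = ∑ a ∈ s, Multiset.replicate (c a) a) (f : α → β) :
    ∑ i, f (x i) = ∑ a ∈ s, c a • f a := by
  rw [sum_eq_multiset_sum, ← Function.comp_def f x, ← Multiset.map_map f x, hx,
    ← Multiset.coe_mapAddMonoidHom, map_sum, ← Multiset.coe_sumAddMonoidHom, map_sum]
  simp

theorem norm_sum_smul_sub_sum_smul_le {ι E : Type*} [SeminormedAddCommGroup E] [NormedSpace ℝ E]
    (s : Finset ι) (p : ι → E) {a b : ι → ℝ} {K : ℝ} (h : ∀ i ∈ s, |a i - b i| ≤ K) :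
    ‖∑ i ∈ s, a i • p i - ∑ i ∈ s, b i • p i‖ ≤ K * ∑ i ∈ s, ‖p i‖ := by
  rw [← sum_sub_distrib, mul_sum]
  refine (norm_sum_le _ _).trans (sum_le_sum fun i hi => ?_)
  rw [← sub_smul, norm_smul, Real.norm_eq_abs]
  exact mul_le_mul_of_nonneg_right (h i hi) (norm_nonneg _)

theorem exists_sum_approx_of_mem_convexHull_of_mem_affineSpan {M : ℕ} [NeZero M]
    {E F : Type*} [SeminormedAddCommGroup E] [NormedSpace ℝ E] [AddCommGroup F]
    [Module (ZMod M) F] {s : Finset E} {V : E} (hV : V ∈ convexHull ℝ (s : Set E)) (φ : E → F)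
    {W : F} (hW : W ∈ affineSpan (ZMod M) (φ '' s)) :
    ∃ (L₀ : ℕ) (C : ℝ), ∀ L : ℕ, L₀ ≤ L → (L : ZMod M) = 1 →
      ∃ x : Fin L → E, (∀ i, x i ∈ s) ∧ ‖∑ i, x i - (L : ℝ) • V‖ ≤ C ∧ ∑ i, φ (x i) = W := by
  obtain ⟨w, hw0, hw1, rfl⟩ := mem_convexHull'.mp hV
  obtain ⟨t, ht1, rfl⟩ := exists_natCast_weights_of_mem_affineSpan_image hW
  refine ⟨∑ p ∈ s, t p, (∑ p ∈ s, t p + M * #s) * ∑ p ∈ s, ‖p‖, fun L hL hLM => ?_⟩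
  obtain ⟨c, hc_sum, hc_mod, hc_approx⟩ :=
    exists_counts_modEq_abs_sub_mul_le (M := M) hw0 hw1 t hL (hLM.trans ht1.symm)
  obtain ⟨x, hx⟩ := exists_map_univ_val_eq (∑ p ∈ s, Multiset.replicate (c p) p) (by simpa)
  have hxs (i : Fin L) : x i ∈ s := by
    have := hx ▸ Multiset.mem_map_of_mem x (mem_univ i)
    simp only [Multiset.mem_sum, Multiset.mem_replicate] at this
    obtain ⟨p, hp, -, rfl⟩ := this
    exact hp
  refine ⟨x, hxs, ?_, ?_⟩
  · rw [show ∑ i, x i = ∑ p ∈ s, c p • p from sum_comp_eq_sum_nsmul_of_map_univ_val_eq hx id,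
      smul_sum]
    simp_rw [smul_smul, ← Nat.cast_smul_eq_nsmul ℝ]
    exact norm_sum_smul_sub_sum_smul_le s id hc_approx
  · simp_rw [sum_comp_eq_sum_nsmul_of_map_univ_val_eq hx, ← Nat.cast_smul_eq_nsmul (ZMod M), hc_mod]

theorem simultaneous_convex_and_affine_approx_general
    (n M : ℕ) (hM : 1 ≤ M)
    (P : Finset (Fin n → ℝ))
    (V : Fin n → ℝ) (hV : V ∈ convexHull ℝ (P : Set (Fin n → ℝ)))
    (W : Fin n → ZMod M)
    (hW : W ∈ affineSpan (ZMod M)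
        ((fun p : Fin n → ℝ => fun j : Fin n => if p j = 1 then (1 : ZMod M) else 0) ''
          (P : Set (Fin n → ℝ)))) :
    ∀ ε : ℝ, 0 < ε → ∃ L₀ : ℕ, ∀ L : ℕ, L₀ ≤ L → (L : ZMod M) = 1 →
      ∃ x : Fin L → (Fin n → ℝ), (∀ i, x i ∈ P) ∧
        (∀ j, |(1 / (L : ℝ)) * ∑ i, x i j - V j| ≤ ε) ∧
        (∀ j, (((Finset.univ.filter fun i : Fin L => x i j = 1).card : ZMod M)) = W j) := by
  intro ε hε
  have : NeZero M := ⟨by omega⟩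
  obtain ⟨L₁, C, hC⟩ := exists_sum_approx_of_mem_convexHull_of_mem_affineSpan hV _ hW
  refine ⟨max L₁ (⌈C / ε⌉₊ + 1), fun L hL hLM => ?_⟩
  obtain ⟨x, hxP, hx_approx, hx_count⟩ := hC L (le_of_max_le_left hL) hLM
  have hL_pos : (0 : ℝ) < L := by exact_mod_cast (by omega : 0 < L)
  have hCL : C ≤ ε * L := by
    rw [← div_le_iff₀' hε]
    exact (Nat.le_ceil _).trans (mod_cast (Nat.le_succ _).trans (le_of_max_le_right hL))
  refine ⟨x, hxP, fun j => ?_, fun j => ?_⟩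
  · have hj : |∑ i, x i j - L * V j| ≤ C := by
      simpa using (norm_le_pi_norm (∑ i, x i - (L : ℝ) • V) j).trans hx_approx
    rw [show (1 / (L : ℝ)) * ∑ i, x i j - V j = (∑ i, x i j - L * V j) / L by field_simp,
      abs_div, abs_of_pos hL_pos, div_le_iff₀ hL_pos]
    exact hj.trans hCL
  · rw [natCast_card_filter, ← hx_count]
    simp [Finset.sum_apply]

/-- Simultaneous approximation (core of the threshold-periodic algorithm): if
`V` lies in the real convex hull of a nonempty finite set `P` of `0/1`-vectors
and `W` lies in the affine span over `ZMod M` of the coordinatewise reduction of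
`P`, then for every `ε > 0` and all sufficiently large `L ≡ 1 (mod M)` there are
`L` points of `P` whose average is within `ε` of `V` in every coordinate and
whose coordinatewise integer sums reduce to `W` modulo `M`. -/
theorem simultaneous_convex_and_affine_approx
    (n M : ℕ) (hn : 1 ≤ n) (hM : 1 ≤ M)
    (P : Finset (Fin n → ℝ)) (hP : P.Nonempty)
    (hP01 : ∀ p ∈ P, ∀ j, p j = 0 ∨ p j = 1)
    (V : Fin n → ℝ) (hV : V ∈ convexHull ℝ (P : Set (Fin n → ℝ)))
    (W : Fin n → ZMod M)
    (hW : W ∈ affineSpan (ZMod M)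
        ((fun p : Fin n → ℝ => fun j : Fin n => if p j = 1 then (1 : ZMod M) else 0) ''
          (P : Set (Fin n → ℝ)))) :
    ∀ ε : ℝ, 0 < ε → ∃ L₀ : ℕ, ∀ L : ℕ, L₀ ≤ L → (L : ZMod M) = 1 →
      ∃ x : Fin L → (Fin n → ℝ), (∀ i, x i ∈ P) ∧
        (∀ j, |(1 / (L : ℝ)) * ∑ i, x i j - V j| ≤ ε) ∧
        (∀ j, (((Finset.univ.filter fun i : Fin L => x i j = 1).card : ZMod M)) = W j) :=
  simultaneous_convex_and_affine_approx_general n M hM P V hV W hW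
end
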